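/- arXiv:2004.05926 — 3 statements merged into one kernel-verified Lean document; each statement's English description precedes it below -/
import Mathlib

section
/- Let $X\subset B(\mathbf{0},1/2)\subset\mathbb{R}^d$ be a compact set which is uniformly sparse: for each $\epsilon>0$ there is $C$ such that for all integers $N\geq C$ and all $x\in X$, $\#\{k\in[1,N]: X\cap(B(x,2^{-k})\setminus B(x,2^{-k-1}))\neq\emptyset\}\leq\epsilon N$. Then for each $\epsilon'>0$ there is a constant $C'$ (depending only on $d$, $\epsilon'$, and the sparseness modulus) such that $N(X,r)\leq C'r^{-\epsilon'}$ for all $r\in(0,1)$. In particular, the upper box dimension of $X$ is zero. -/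
/-!
Let `S ⊆ X` be a maximal `2^{-N}`-separated set. For `s₀ ∈ S`, every other point of `S` lies in one
of the dyadic annuli around `s₀` at scales `k ∈ [0, N]`, and the `k`-th annulus is covered by `c`
balls of radius `2^{-k}/4`, where `c` depends only on the dimension. Every point of such a ball sees
`s₀` in its own `k`-th annulus, so the points of the ball form a configuration of the same kind at
scale `k + 1` in which each point has one occupied scale fewer. Hence, if each point of `S` has at
most `q` occupied scales, `|S| ≤ B(N + 1, q)` where `B(n, q + 1) = 1 + c ∑_{m < n} B(m, q)`, and for
every `t ∈ (0, 1]` this recursion gives `B(n, q) ≤ (1 + ct)^n / t^q`: a generating-function bound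
for `∑_{ℓ ≤ q} c^ℓ (n choose ℓ)`. Sparseness gives `q ≤ εN + C`; choosing first `t` and then `ε`
small makes the bound `O(2^{ε' N})`, and for `2^{-N} ≈ r` one cube of side `r` per point of `S`
covers `X`.
-/

open Metric
open scoped Classical

/-- A closed cube in `ℝ^d` with lower-left corner `x` and side length `r`. -/
def closedCube {d : ℕ} (x : EuclideanSpace ℝ (Fin d)) (r : ℝ) :
    Set (EuclideanSpace ℝ (Fin d)) :=
  {y | ∀ i, y i ∈ Set.Icc (x i) (x i + r)}

open Finset Filter Topology
open scoped NNReal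

def BallCoveringBound (E : Type*) [PseudoMetricSpace E] (κ : ℝ) (c : ℕ) : Prop :=
  ∀ (x : E) (R : ℝ), 0 < R →
    ∃ T : Finset E, T.card ≤ c ∧ closedBall x R ⊆ ⋃ y ∈ T, closedBall y (κ * R)

theorem exists_ballCoveringBound (E : Type*) [NormedAddCommGroup E] [NormedSpace ℝ E]
    [ProperSpace E] {κ : ℝ} (hκ : 0 < κ) : ∃ c, BallCoveringBound E κ c := by
  obtain ⟨T₀, -, hT₀, hcov⟩ := (isCompact_closedBall (0 : E) 1).finite_cover_balls hκ
  refine ⟨hT₀.toFinset.card, fun x R hR => ⟨hT₀.toFinset.image (fun y => x + R • y),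
    card_image_le, fun z hz => ?_⟩⟩
  have hz' : R⁻¹ • (z - x) ∈ closedBall (0 : E) 1 := by
    rw [mem_closedBall, dist_eq_norm] at hz
    rw [mem_closedBall_zero_iff, norm_smul, norm_inv, Real.norm_of_nonneg hR.le]
    exact inv_mul_le_one_of_le₀ hz hR.le
  obtain ⟨y, hy, hzy⟩ := Set.mem_iUnion₂.1 (hcov hz')
  refine Set.mem_iUnion₂.2 ⟨x + R • y, by simpa using ⟨y, hy, rfl⟩, ?_⟩
  have : z - (x + R • y) = R • (R⁻¹ • (z - x) - y) := by
    rw [smul_sub, smul_inv_smul₀ hR.ne']; abel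
  rw [mem_closedBall, dist_eq_norm, this, norm_smul, Real.norm_of_nonneg hR.le, mul_comm κ]
  exact mul_le_mul_of_nonneg_left (mem_ball_iff_norm.1 hzy).le hR.le

theorem IsCompact.exists_finset_separated_net {E : Type*} [PseudoMetricSpace E] {X : Set E}
    (hX : IsCompact X) {δ : ℝ} (hδ : 0 < δ) :
    ∃ S : Finset E, ↑S ⊆ X ∧ (S : Set E).Pairwise (fun a b => δ < dist a b) ∧
      X ⊆ ⋃ s ∈ S, closedBall s δ := by
  set ε : ℝ≥0 := δ.toNNReal
  have hε : ε ≠ 0 := by simpa [ε] using hδ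
  have hfin : packingNumber ε X ≠ ⊤ := by
    obtain ⟨N, -, hNf, hN⟩ := exists_finite_isCover_of_isCompact (ε := ε / 2) (by simpa) hX
    have h2 := packingNumber_two_mul_le_externalCoveringNumber (ε / 2) X
    rw [mul_div_cancel₀ _ two_ne_zero] at h2
    exact ne_top_of_le_ne_top hNf.encard_lt_top.ne (h2.trans hN.externalCoveringNumber_le_encard)
  have hSf : (maximalSeparatedSet ε X).Finite :=
    Set.encard_ne_top_iff.mp (encard_maximalSeparatedSet hfin ▸ hfin)
  refine ⟨hSf.toFinset, by simpa using maximalSeparatedSet_subset, ?_, ?_⟩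
  · intro a ha b hb hab
    have : (ε : ENNReal) < edist a b :=
      isSeparated_maximalSeparatedSet (by simpa using ha) (by simpa using hb) hab
    rw [edist_dist, ← ENNReal.ofReal_coe_nnreal] at this
    simpa [ε, hδ.le] using (ENNReal.ofReal_lt_ofReal_iff_of_nonneg ε.2).1 this
  · have := isCover_iff_subset_iUnion_closedBall.1 (isCover_maximalSeparatedSet hfin)
    simpa [ε, hδ.le] using this

lemma card_le_sum_card_filter_closedBall {E : Type*} [PseudoMetricSpace E] {A T : Finset E} {ρ : ℝ}
    (hA : ↑A ⊆ ⋃ y ∈ T, closedBall y ρ) :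
    A.card ≤ ∑ y ∈ T, (A.filter (· ∈ closedBall y ρ)).card := by
  refine (card_le_card fun z hz => ?_).trans card_biUnion_le
  obtain ⟨y, hy, hzy⟩ := Set.mem_iUnion₂.1 (hA hz)
  exact mem_biUnion.2 ⟨y, hy, mem_filter.2 ⟨hz, hzy⟩⟩

lemma two_zpow_neg_sub_one (k : ℤ) : (2:ℝ) ^ (-k - 1) = 2 ^ (-k) / 2 := by
  rw [zpow_sub₀ two_ne_zero, zpow_one]

lemma one_add_sum_mul_pow_div_le {c t : ℝ} (ht0 : 0 < t) (ht1 : t ≤ 1) (q j N : ℕ) :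
    1 + ∑ k ∈ Icc j N, c * ((1 + c * t) ^ (N - k) / t ^ q) ≤
      (1 + c * t) ^ (N + 1 - j) / t ^ (q + 1) := by
  set x := 1 + c * t
  have hreflect : ∑ k ∈ Icc j N, x ^ (N - k) = ∑ u ∈ range (N + 1 - j), x ^ u := by
    rw [← Ico_add_one_right_eq_Icc, sum_Ico_reflect _ _ le_rfl, Nat.sub_self, range_eq_Ico]
  have hgeom : (∑ u ∈ range (N + 1 - j), x ^ u) * (c * t) = x ^ (N + 1 - j) - 1 := by
    simpa [x] using geom_sum_mul x (N + 1 - j)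
  have hone : 1 ≤ 1 / t ^ (q + 1) := one_le_one_div (by positivity) (pow_le_one₀ ht0.le ht1)
  calc 1 + ∑ k ∈ Icc j N, c * (x ^ (N - k) / t ^ q)
      = 1 + (∑ u ∈ range (N + 1 - j), x ^ u) * (c * t) / t ^ (q + 1) := by
        rw [← mul_sum, ← sum_div, hreflect, pow_succ]; field_simp
    _ = 1 + (x ^ (N + 1 - j) - 1) / t ^ (q + 1) := by rw [hgeom]
    _ ≤ x ^ (N + 1 - j) / t ^ (q + 1) := by rw [sub_div]; linarith

lemma inv_pow_le_of_le_mul_add {t ε β : ℝ} (ht0 : 0 < t) (ht1 : t ≤ 1) (hε : t⁻¹ ^ ε ≤ β)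
    {q N C : ℕ} (hq : (q : ℝ) ≤ ε * N + C) : (t ^ q)⁻¹ ≤ β ^ N * (t ^ C)⁻¹ := by
  have hinv : 1 ≤ t⁻¹ := (one_le_inv₀ ht0).2 ht1
  calc (t ^ q)⁻¹ = t⁻¹ ^ (q : ℝ) := by rw [Real.rpow_natCast, inv_pow]
    _ ≤ t⁻¹ ^ (ε * N + C) := Real.rpow_le_rpow_of_exponent_le hinv hq
    _ = (t⁻¹ ^ ε) ^ N * (t ^ C)⁻¹ := by
      rw [Real.rpow_add (by positivity), Real.rpow_mul (by positivity), Real.rpow_natCast,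
        Real.rpow_natCast, inv_pow]
    _ ≤ β ^ N * (t ^ C)⁻¹ := by gcongr

lemma exists_pos_le_one_one_add_mul_le (c : ℝ) {β : ℝ} (hβ : 1 < β) :
    ∃ t : ℝ, 0 < t ∧ t ≤ 1 ∧ 1 + c * t ≤ β := by
  have hlim : Tendsto (fun t : ℝ => 1 + c * t) (𝓝 0) (𝓝 1) := by
    simpa using ((tendsto_id (x := 𝓝 (0:ℝ))).const_mul c).const_add 1
  exact ((eventually_le_nhds one_pos).and (hlim.eventually_le_const hβ)).exists_gt

lemma exists_pos_rpow_le {a : ℝ} (ha : a ≠ 0) {β : ℝ} (hβ : 1 < β) :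
    ∃ ε : ℝ, 0 < ε ∧ a ^ ε ≤ β := by
  have hlim : Tendsto (fun ε : ℝ => a ^ ε) (𝓝 0) (𝓝 1) := by
    simpa using (Real.continuousAt_const_rpow ha (b := 0)).tendsto
  exact (hlim.eventually_le_const hβ).exists_gt

lemma exists_nat_two_zpow_le_half {r : ℝ} (hr0 : 0 < r) (hr2 : r ≤ 2) :
    ∃ N : ℕ, (2:ℝ) ^ (-(N:ℤ)) ≤ r / 2 ∧ (2:ℝ) ^ N ≤ 4 / r := by
  obtain ⟨n, hn, hn'⟩ := exists_nat_pow_near (x := 2 / r) ((one_le_div hr0).2 hr2) one_lt_two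
  refine ⟨n + 1, ?_, ?_⟩
  · rw [zpow_neg, zpow_natCast, inv_le_comm₀ (by positivity) (by positivity), inv_div]
    exact hn'.le
  · calc (2:ℝ) ^ (n + 1) = 2 * 2 ^ n := pow_succ' 2 n
      _ ≤ 2 * (2 / r) := by gcongr
      _ = 4 / r := by ring

lemma closedBall_subset_closedCube {d : ℕ} (s : EuclideanSpace ℝ (Fin d)) (r : ℝ) :
    closedBall s (r / 2) ⊆ closedCube (WithLp.toLp 2 fun i => s i - r / 2) r := by
  intro y hy i
  have h := abs_le.1 ((PiLp.dist_apply_le y s i).trans (mem_closedBall.1 hy))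
  show y i ∈ Set.Icc (s i - r / 2) (s i - r / 2 + r)
  constructor <;> linarith

section Sparse

variable {E : Type*} [PseudoMetricSpace E]

def dyadicAnnulus (x : E) (k : ℕ) : Set E :=
  closedBall x ((2:ℝ) ^ (-(k:ℤ))) \ closedBall x ((2:ℝ) ^ (-(k:ℤ) - 1))

lemma dyadicAnnulus_subset_closedBall {x : E} {k : ℕ} :
    dyadicAnnulus x k ⊆ closedBall x (2 ^ (-(k:ℤ))) :=
  Set.sdiff_subset

lemma mem_dyadicAnnulus_comm {x y : E} {k : ℕ} :
    y ∈ dyadicAnnulus x k ↔ x ∈ dyadicAnnulus y k := by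
  simp only [dyadicAnnulus, Set.mem_sdiff, mem_closedBall_comm]

lemma exists_mem_dyadicAnnulus {x y : E} {j N : ℕ} (hN : (2:ℝ) ^ (-(N:ℤ)) ≤ dist y x)
    (hj : dist y x ≤ 2 ^ (-(j:ℤ))) : ∃ k ∈ Icc j N, y ∈ dyadicAnnulus x k := by
  obtain ⟨n, hlo, hhi⟩ := exists_mem_Ioc_zpow (hN.trans_lt' (by positivity)) one_lt_two
  have hjn : n < -(j:ℤ) := (zpow_lt_zpow_iff_right₀ one_lt_two).1 (hlo.trans_le hj)
  have hnN : -(N:ℤ) ≤ n + 1 := (zpow_le_zpow_iff_right₀ one_lt_two).1 (hN.trans hhi)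
  lift -(n + 1) to ℕ using (by omega) with k hk
  refine ⟨k, mem_Icc.2 ⟨by omega, by omega⟩, ?_⟩
  simp only [dyadicAnnulus, Set.mem_sdiff, mem_closedBall, not_le, hk]
  exact ⟨by simpa using hhi, by simpa using hlo⟩

/-- `W(X, x) ∩ s` in the notation of the paper. -/
noncomputable def occupiedScales (X : Set E) (x : E) (s : Finset ℕ) : Finset ℕ :=
  s.filter fun k => (X ∩ dyadicAnnulus x k).Nonempty

def UniformlySparse (X : Set E) : Prop :=
  ∀ ε > (0:ℝ), ∃ C : ℕ, ∀ N : ℕ, C ≤ N → ∀ x ∈ X,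
    ((occupiedScales X x (Icc 1 N)).card : ℝ) ≤ ε * N

lemma UniformlySparse.exists_card_occupiedScales_le {X : Set E} (hX : UniformlySparse X)
    {ε : ℝ} (hε : 0 < ε) :
    ∃ C : ℕ, ∀ N : ℕ, ∀ x ∈ X, ((occupiedScales X x (Icc 1 N)).card : ℝ) ≤ ε * N + C := by
  obtain ⟨C, hC⟩ := hX ε hε
  refine ⟨C, fun N x hx => ?_⟩
  rcases le_or_gt C N with hCN | hNC
  · linarith [hC N hCN x hx, (Nat.cast_nonneg C : (0:ℝ) ≤ C)]
  · have : ((occupiedScales X x (Icc 1 N)).card : ℝ) ≤ C := by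
      exact_mod_cast (card_filter_le _ _).trans (by simpa using hNC.le)
    linarith [(by positivity : (0:ℝ) ≤ ε * N)]

lemma card_occupiedScales_Icc_succ_lt {X : Set E} {y : E} {j k N : ℕ} (hk : k ∈ Icc j N)
    (hocc : (X ∩ dyadicAnnulus y k).Nonempty) :
    (occupiedScales X y (Icc (k + 1) N)).card < (occupiedScales X y (Icc j N)).card := by
  refine card_lt_card ((ssubset_iff_of_subset ?_).2 ⟨k, ?_, ?_⟩)
  · exact filter_subset_filter _ (Icc_subset_Icc (by simp at hk; omega) le_rfl)
  · exact mem_filter.2 ⟨hk, hocc⟩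
  · simp [occupiedScales]

structure IsSparseCluster (X : Set E) (N j q : ℕ) (S : Finset E) (s₀ : E) : Prop where
  subset : ↑S ⊆ X
  separated : (S : Set E).Pairwise fun a b => (2:ℝ) ^ (-(N:ℤ)) < dist a b
  center_mem : s₀ ∈ S
  dist_le : ∀ y ∈ S, dist y s₀ ≤ 2 ^ (-(j:ℤ))
  card_occupiedScales_le : ∀ y ∈ S, (occupiedScales X y (Icc j N)).card ≤ q

namespace IsSparseCluster

variable {X : Set E} {N j q : ℕ} {S : Finset E} {s₀ : E}

lemma exists_mem_dyadicAnnulus (h : IsSparseCluster X N j q S s₀) {y : E} (hy : y ∈ S)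
    (hne : y ≠ s₀) : ∃ k ∈ Icc j N, y ∈ dyadicAnnulus s₀ k :=
  _root_.exists_mem_dyadicAnnulus (h.separated hy h.center_mem hne).le (h.dist_le y hy)

lemma subset_singleton (h : IsSparseCluster X N j 0 S s₀) : S ⊆ {s₀} := by
  intro y hy
  by_contra hne
  obtain ⟨k, hk, hyk⟩ := h.exists_mem_dyadicAnnulus hy (by simpa using hne)
  have := (h.card_occupiedScales_le y hy).trans_lt' (card_occupiedScales_Icc_succ_lt hk
    ⟨s₀, h.subset h.center_mem, mem_dyadicAnnulus_comm.1 hyk⟩)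
  omega

lemma piece (h : IsSparseCluster X N j (q + 1) S s₀) {k : ℕ} (hk : k ∈ Icc j N) {P : Finset E}
    (hPS : P ⊆ S) (hPk : ↑P ⊆ dyadicAnnulus s₀ k) {y : E}
    (hPy : ↑P ⊆ closedBall y (4⁻¹ * 2 ^ (-(k:ℤ)))) {s' : E} (hs' : s' ∈ P) :
    IsSparseCluster X N (k + 1) q P s' := by
  refine ⟨fun z hz => h.subset (hPS hz), h.separated.mono fun z hz => hPS hz, hs',
    fun z hz => ?_, fun z hz => ?_⟩
  · have := dist_triangle_right z s' y
    rw [Nat.cast_succ, neg_add', two_zpow_neg_sub_one]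
    linarith [mem_closedBall.1 (hPy hz), mem_closedBall.1 (hPy hs')]
  · have := card_occupiedScales_Icc_succ_lt hk
      ⟨s₀, h.subset h.center_mem, mem_dyadicAnnulus_comm.1 (hPk hz)⟩
    have := h.card_occupiedScales_le z (hPS hz)
    omega

lemma subset_insert_biUnion (h : IsSparseCluster X N j q S s₀) :
    S ⊆ insert s₀ ((Icc j N).biUnion fun k => S.filter (· ∈ dyadicAnnulus s₀ k)) := by
  intro y hy
  by_cases hne : y = s₀
  · simp [hne]
  obtain ⟨k, hk, hyk⟩ := h.exists_mem_dyadicAnnulus hy hne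
  simp only [mem_insert, mem_biUnion, mem_filter]
  exact Or.inr ⟨k, hk, hy, hyk⟩

lemma card_shell_le {c : ℕ} (hcov : BallCoveringBound E 4⁻¹ c)
    (h : IsSparseCluster X N j (q + 1) S s₀) {k : ℕ}
    (hk : k ∈ Icc j N) {B : ℝ} (hB : 0 ≤ B)
    (ih : ∀ {S' : Finset E} {s' : E}, IsSparseCluster X N (k + 1) q S' s' → (S'.card : ℝ) ≤ B) :
    ((S.filter (· ∈ dyadicAnnulus s₀ k)).card : ℝ) ≤ c * B := by
  obtain ⟨T, hTc, hT⟩ := hcov s₀ (2 ^ (-(k:ℤ))) (by positivity)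
  set shell := S.filter (· ∈ dyadicAnnulus s₀ k)
  have hpiece : ∀ y, ((shell.filter (· ∈ closedBall y (4⁻¹ * 2 ^ (-(k:ℤ))))).card : ℝ) ≤ B := by
    intro y
    rcases (shell.filter (· ∈ closedBall y (4⁻¹ * 2 ^ (-(k:ℤ))))).eq_empty_or_nonempty
      with he | ⟨s', hs'⟩
    · rwa [he, card_empty, Nat.cast_zero]
    · exact ih (h.piece hk ((filter_subset _ _).trans (filter_subset _ _))
        (fun z hz => (mem_filter.1 (mem_filter.1 hz).1).2) (y := y)
        (fun z hz => (mem_filter.1 hz).2) hs')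
  calc (shell.card : ℝ)
      ≤ ∑ y ∈ T, ((shell.filter (· ∈ closedBall y (4⁻¹ * 2 ^ (-(k:ℤ))))).card : ℝ) := by
        exact_mod_cast card_le_sum_card_filter_closedBall fun z hz =>
          hT (dyadicAnnulus_subset_closedBall (mem_filter.1 (mem_coe.1 hz)).2)
    _ ≤ T.card * B := by rw [← nsmul_eq_mul]; exact sum_le_card_nsmul _ _ _ fun y _ => hpiece y
    _ ≤ c * B := by gcongr

theorem card_le {c : ℕ} (hcov : BallCoveringBound E 4⁻¹ c) {t : ℝ} (ht0 : 0 < t) (ht1 : t ≤ 1)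
    (h : IsSparseCluster X N j q S s₀) : (S.card : ℝ) ≤ (1 + c * t) ^ (N + 1 - j) / t ^ q := by
  induction q generalizing j S s₀ with
  | zero =>
    calc (S.card : ℝ) ≤ 1 := by
          exact_mod_cast (card_le_card h.subset_singleton).trans (card_singleton s₀).le
      _ ≤ _ := by
          simpa using one_le_pow₀ (le_add_of_nonneg_right (by positivity) : (1:ℝ) ≤ 1 + c * t)
  | succ q ih =>
    have hshell : ∀ k ∈ Icc j N,
        ((S.filter (· ∈ dyadicAnnulus s₀ k)).card : ℝ) ≤ c * ((1 + c * t) ^ (N - k) / t ^ q) :=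
      fun k hk => h.card_shell_le hcov hk (by positivity) fun h' => by simpa using ih h'
    have hS : S.card ≤ (∑ k ∈ Icc j N, (S.filter (· ∈ dyadicAnnulus s₀ k)).card) + 1 :=
      (card_le_card h.subset_insert_biUnion).trans
        ((card_insert_le _ _).trans (by gcongr; exact card_biUnion_le))
    calc (S.card : ℝ) ≤ 1 + ∑ k ∈ Icc j N, ((S.filter (· ∈ dyadicAnnulus s₀ k)).card : ℝ) := by
          rw [add_comm]; exact_mod_cast hS
      _ ≤ 1 + ∑ k ∈ Icc j N, c * ((1 + c * t) ^ (N - k) / t ^ q) := by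
          gcongr with k hk; exact hshell k hk
      _ ≤ _ := one_add_sum_mul_pow_div_le ht0 ht1 q j N

end IsSparseCluster

lemma card_occupiedScales_Icc_zero_le (X : Set E) (y : E) (N : ℕ) :
    (occupiedScales X y (Icc 0 N)).card ≤ (occupiedScales X y (Icc 1 N)).card + 1 := by
  have hIcc : Icc 0 N ⊆ insert 0 (Icc 1 N) := fun k hk => by simp at hk ⊢; omega
  refine (card_le_card (filter_subset_filter _ hIcc)).trans ?_
  rw [occupiedScales, filter_insert]
  split_ifs
  exacts [card_insert_le _ _, Nat.le_succ _]

lemma IsSparseCluster.of_diam_le {X : Set E} (hXb : Bornology.IsBounded X) (hdiam : diam X ≤ 1)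
    {N q : ℕ} {S : Finset E} {s₀ : E} (hSX : ↑S ⊆ X)
    (hsep : (S : Set E).Pairwise fun a b => (2:ℝ) ^ (-(N:ℤ)) < dist a b) (hs₀ : s₀ ∈ S)
    (hq : ∀ y ∈ S, (occupiedScales X y (Icc 1 N)).card ≤ q) :
    IsSparseCluster X N 0 (q + 1) S s₀ where
  subset := hSX
  separated := hsep
  center_mem := hs₀
  dist_le y hy := by simpa using (dist_le_diam_of_mem hXb (hSX hy) (hSX hs₀)).trans hdiam
  card_occupiedScales_le y hy :=
    (card_occupiedScales_Icc_zero_le X y N).trans (by simpa using hq y hy)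

theorem UniformlySparse.exists_card_net_le {X : Set E} (hX : UniformlySparse X)
    (hXc : IsCompact X) (hdiam : diam X ≤ 1) {c : ℕ} (hcov : BallCoveringBound E 4⁻¹ c)
    {b : ℝ} (hb : 1 < b) :
    ∃ K > (0:ℝ), ∀ N : ℕ, ∃ S : Finset E,
      X ⊆ ⋃ s ∈ S, closedBall s ((2:ℝ) ^ (-(N:ℤ))) ∧ (S.card : ℝ) ≤ K * b ^ N := by
  have hβ : 1 < √b := by rwa [Real.lt_sqrt zero_le_one, one_pow]
  obtain ⟨t, ht0, ht1, htβ⟩ := exists_pos_le_one_one_add_mul_le c hβ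
  obtain ⟨ε, hε0, hεβ⟩ := exists_pos_rpow_le (inv_ne_zero ht0.ne') hβ
  obtain ⟨C, hC⟩ := hX.exists_card_occupiedScales_le hε0
  refine ⟨√b * (t ^ (C + 1))⁻¹, by positivity, fun N => ?_⟩
  obtain ⟨S, hSX, hsep, hcover⟩ :=
    hXc.exists_finset_separated_net (δ := 2 ^ (-(N:ℤ))) (by positivity)
  refine ⟨S, hcover, ?_⟩
  rcases S.eq_empty_or_nonempty with rfl | ⟨s₀, hs₀⟩
  · rw [card_empty, Nat.cast_zero]; positivity
  set q := ⌊ε * N + C⌋₊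
  have hcl : IsSparseCluster X N 0 (q + 1) S s₀ := .of_diam_le hXc.isBounded hdiam hSX hsep hs₀
    fun y hy => Nat.le_floor (hC N y (hSX hy))
  have hq : ((q + 1 : ℕ) : ℝ) ≤ ε * N + (C + 1 : ℕ) := by
    push_cast; linarith [Nat.floor_le (by positivity : 0 ≤ ε * N + C)]
  calc (S.card : ℝ) ≤ (1 + c * t) ^ (N + 1) / t ^ (q + 1) := by simpa using hcl.card_le hcov ht0 ht1
    _ ≤ √b ^ (N + 1) * (√b ^ N * (t ^ (C + 1))⁻¹) := by
      rw [div_eq_mul_inv]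
      gcongr
      exact inv_pow_le_of_le_mul_add ht0 ht1 hεβ hq
    _ = √b * (t ^ (C + 1))⁻¹ * b ^ N := by
      have hbN : b ^ N = √b ^ N * √b ^ N := by
        rw [← mul_pow, Real.mul_self_sqrt (zero_le_one.trans hb.le)]
      rw [hbN]; ring

end Sparse

/-- a compact, uniformly sparse set `X ⊆ B(0,1/2)` has covering numbers
`N(X,r) ≤ C' r^{-ε'}` for every `ε' > 0`. -/
theorem statement2 (d : ℕ) (X : Set (EuclideanSpace ℝ (Fin d)))
    (hXc : IsCompact X) (hXb : X ⊆ closedBall 0 (1/2))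
    (hsparse : ∀ ε > (0:ℝ), ∃ C : ℕ, ∀ N : ℕ, C ≤ N → ∀ x ∈ X,
      (((Finset.Icc 1 N).filter (fun k : ℕ =>
        (X ∩ (closedBall x ((2:ℝ)^(-(k:ℤ))) \ closedBall x ((2:ℝ)^(-(k:ℤ)-1)))).Nonempty)).card : ℝ)
        ≤ ε * N) :
    ∀ ε' > (0:ℝ), ∃ C' > (0:ℝ), ∀ r ∈ Set.Ioo (0:ℝ) 1,
      ∃ (n : ℕ) (f : Fin n → EuclideanSpace ℝ (Fin d)),
        X ⊆ (⋃ i, closedCube (f i) r) ∧ (n : ℝ) ≤ C' * r ^ (-ε') := by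
  intro ε' hε'
  obtain ⟨c, hc⟩ := exists_ballCoveringBound (EuclideanSpace ℝ (Fin d)) (κ := 4⁻¹) (by norm_num)
  have hdiam : diam X ≤ 1 := by
    simpa using (diam_mono hXb isBounded_closedBall).trans (diam_closedBall (by norm_num))
  obtain ⟨K, hK0, hK⟩ := UniformlySparse.exists_card_net_le (X := X) hsparse hXc hdiam hc
    (Real.one_lt_rpow one_lt_two hε')
  refine ⟨K * 4 ^ ε', by positivity, fun r ⟨hr0, hr1⟩ => ?_⟩
  obtain ⟨N, hNr, hN⟩ := exists_nat_two_zpow_le_half hr0 (by linarith)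
  obtain ⟨S, hXS, hS⟩ := hK N
  refine ⟨S.card, fun i => WithLp.toLp 2 fun l => (S.equivFin.symm i).1 l - r / 2, ?_, ?_⟩
  · intro x hx
    obtain ⟨s, hs, hxs⟩ := Set.mem_iUnion₂.1 (hXS hx)
    refine Set.mem_iUnion.2 ⟨S.equivFin ⟨s, hs⟩, ?_⟩
    simpa using closedBall_subset_closedCube s r (closedBall_subset_closedBall hNr hxs)
  · calc (S.card : ℝ) ≤ K * ((2:ℝ) ^ ε') ^ N := hS
      _ = K * ((2:ℝ) ^ N) ^ ε' := by rw [Real.rpow_pow_comm zero_le_two]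
      _ ≤ K * (4 / r) ^ ε' := by gcongr
      _ = K * 4 ^ ε' * r ^ (-ε') := by
        rw [Real.div_rpow zero_le_four hr0.le, Real.rpow_neg hr0.le]; ring
end

section
/- Let $\mu$ be a probability measure supported on a compact set $X\subset B(\mathbf{0},1/2)\subset\mathbb{R}^d$ with doubling constant $D$, i.e. $\mu(B(x,2r))\leq D\mu(B(x,r))$ for all $x\in X$, $r>0$. Let $x\in X$ and $N\in\mathbb{N}$, and suppose that the set $W(X,x)\cap[1,N]=\{k\in[1,N]: X\cap(B(x,2^{-k})\setminus B(x,2^{-k-1}))\neq\emptyset\}$ has cardinality at most $\epsilon N$. Then $\mu(B(x,2^{-N}))\geq D^{-\epsilon N - 1}$. -/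
/-!
Halving the radius of a ball about `x` costs at most a factor `D` by doubling, and costs nothing
when the dyadic annulus in between misses `X`, which carries all of `μ`. Starting from
`μ(B(x,1)) = 1`, only the nonempty annuli among the first `N` halvings lose a factor `D`, and there
are at most `εN + 1` of them (the annulus `k = 0` is not counted by the hypothesis).
-/

open Metric MeasureTheory
open scoped Classical

open Finset in
theorem le_pow_card_filter_mul {M : Type*} [Monoid M] [Preorder M] [MulLeftMono M]
    {f : ℕ → M} {c : M} {P : ℕ → Prop} [DecidablePred P]
    (hstep : ∀ k, P k → f k ≤ c * f (k + 1)) (hskip : ∀ k, ¬P k → f k ≤ f (k + 1)) (n : ℕ) :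
    f 0 ≤ c ^ #{k ∈ range n | P k} * f n := by
  induction n with
  | zero => simp
  | succ n ih =>
    rw [range_add_one, filter_insert]
    split_ifs with hP
    · rw [card_insert_of_notMem (by simp), pow_succ, mul_assoc]
      exact ih.trans (mul_le_mul_right (hstep n hP) _)
    · exact ih.trans (mul_le_mul_right (hskip n hP) _)

open Finset in
theorem card_filter_range_le_card_filter_Icc_add_one (P : ℕ → Prop) [DecidablePred P] (n : ℕ) :
    #{k ∈ range n | P k} ≤ #{k ∈ Icc 1 n | P k} + 1 := by
  refine (card_le_card (t := insert 0 {k ∈ Icc 1 n | P k}) ?_).trans (card_insert_le _ _)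
  rintro (_ | k) hk
  · exact mem_insert_self _ _
  · simp only [mem_filter, mem_range, mem_insert, mem_Icc] at hk ⊢
    exact Or.inr ⟨⟨by omega, by omega⟩, hk.2⟩

theorem ENNReal.ofReal_rpow_neg_le_of_one_le_pow_mul {D t : ℝ} {m : ℕ} {a : ENNReal}
    (hD : 1 ≤ D) (hm : (m : ℝ) ≤ t) (h : 1 ≤ ENNReal.ofReal D ^ m * a) :
    ENNReal.ofReal (D ^ (-t)) ≤ a := by
  have hD0 : 0 < D := one_pos.trans_le hD
  have hinv : (ENNReal.ofReal D ^ m)⁻¹ ≤ a :=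
    (ENNReal.inv_le_iff_le_mul (fun _ => pow_ne_zero _ (ENNReal.ofReal_pos.mpr hD0).ne')
      (fun h => absurd h (ENNReal.pow_ne_top ENNReal.ofReal_ne_top))).mpr h
  refine le_trans ?_ hinv
  rw [← ENNReal.ofReal_pow hD0.le, ← ENNReal.ofReal_inv_of_pos (pow_pos hD0 m)]
  refine ENNReal.ofReal_le_ofReal ?_
  calc D ^ (-t) ≤ D ^ (-(m : ℝ)) := Real.rpow_le_rpow_of_exponent_le hD (neg_le_neg hm)
    _ = (D ^ m)⁻¹ := by rw [Real.rpow_neg hD0.le, Real.rpow_natCast]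

section NullComplement

variable {α : Type*} [MeasurableSpace α] {μ : Measure α} {X : Set α}

theorem measure_le_of_inter_subset (hX : μ Xᶜ = 0) {A B : Set α} (h : X ∩ A ⊆ B) :
    μ A ≤ μ B :=
  measure_mono_ae <| (measure_eq_zero_iff_ae_notMem.mp hX).mono fun _ hy hA =>
    h ⟨not_not.mp hy, hA⟩

theorem measure_eq_one_of_subset [IsProbabilityMeasure μ] (hX : μ Xᶜ = 0) {B : Set α}
    (h : X ⊆ B) : μ B = 1 :=
  le_antisymm prob_le_one <| measure_univ (μ := μ) ▸ measure_le_of_inter_subset hX fun _ hy => h hy.1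

theorem measure_closedBall_le_of_annulus_eq_empty [PseudoMetricSpace α] (hX : μ Xᶜ = 0)
    {x : α} {r s : ℝ} (h : X ∩ (closedBall x r \ closedBall x s) = ∅) :
    μ (closedBall x r) ≤ μ (closedBall x s) :=
  measure_le_of_inter_subset hX fun y ⟨hyX, hyr⟩ => by
    by_contra hys
    exact h.subset ⟨hyX, hyr, hys⟩

end NullComplement

theorem statement4_general (d : ℕ) (X : Set (EuclideanSpace ℝ (Fin d)))
    (hXb : X ⊆ closedBall 0 (1/2))
    (μ : Measure (EuclideanSpace ℝ (Fin d))) (hprob : IsProbabilityMeasure μ)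
    (hsupp : μ Xᶜ = 0) (D : ℝ) (hD : 1 ≤ D)
    (hdouble : ∀ x ∈ X, ∀ r : ℝ, 0 < r →
      μ (closedBall x (2 * r)) ≤ ENNReal.ofReal D * μ (closedBall x r))
    (x : EuclideanSpace ℝ (Fin d)) (hx : x ∈ X) (N : ℕ) (ε : ℝ)
    (hsparse : (((Finset.Icc 1 N).filter (fun k : ℕ =>
        (X ∩ (closedBall x ((2:ℝ)^(-(k:ℤ))) \ closedBall x ((2:ℝ)^(-(k:ℤ)-1)))).Nonempty)).card : ℝ)
        ≤ ε * N) :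
    ENNReal.ofReal (D ^ (-(ε * N) - 1)) ≤ μ (closedBall x ((2:ℝ)^(-(N:ℤ)))) := by
  set f : ℕ → ENNReal := fun k => μ (closedBall x ((2:ℝ)^(-(k:ℤ))))
  have hhalf (k : ℕ) : (2:ℝ)^(-(k:ℤ)-1) = 2^(-((k + 1 : ℕ) : ℤ)) := by push_cast; ring_nf
  have hf0 : f 0 = 1 := measure_eq_one_of_subset hsupp fun y hy =>
    closedBall_subset_closedBall' (by
      rw [dist_zero_left]; linarith [mem_closedBall_zero_iff.mp (hXb hx)]) (hXb hy)
  have hstep (k : ℕ) : f k ≤ ENNReal.ofReal D * f (k + 1) := by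
    have h := hdouble x hx _ (zpow_pos two_pos (-(k:ℤ) - 1))
    rwa [← zpow_one_add₀ two_ne_zero, add_sub_cancel, hhalf] at h
  have hskip (k : ℕ)
      (hk : ¬(X ∩ (closedBall x ((2:ℝ)^(-(k:ℤ))) \ closedBall x ((2:ℝ)^(-(k:ℤ)-1)))).Nonempty) :
      f k ≤ f (k + 1) := by
    have h := measure_closedBall_le_of_annulus_eq_empty hsupp (Set.not_nonempty_iff_eq_empty.mp hk)
    rwa [hhalf] at h
  have hchain := le_pow_card_filter_mul (fun k _ => hstep k) hskip N
  rw [hf0] at hchain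
  rw [show -(ε * N) - 1 = -(ε * N + 1) by ring]
  refine ENNReal.ofReal_rpow_neg_le_of_one_le_pow_mul hD ?_ hchain
  calc _ ≤ _ := Nat.cast_le.mpr (card_filter_range_le_card_filter_Icc_add_one _ N)
    _ ≤ ε * N + 1 := by push_cast; linarith

/-- mass decay for a doubling measure on a sparse set. If `μ` is a
probability measure supported on a compact `X ⊆ B(0,1/2)` with doubling constant
`D`, `x ∈ X`, and at most `ε N` of the dyadic annuli `B(x,2^{-k}) \ B(x,2^{-k-1})`,
`1 ≤ k ≤ N`, meet `X`, then `μ(B(x,2^{-N})) ≥ D^{-εN-1}`. -/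
theorem statement4 (d : ℕ) (X : Set (EuclideanSpace ℝ (Fin d)))
    (hXc : IsCompact X) (hXb : X ⊆ closedBall 0 (1/2))
    (μ : Measure (EuclideanSpace ℝ (Fin d))) (hprob : IsProbabilityMeasure μ)
    (hsupp : μ Xᶜ = 0) (D : ℝ) (hD : 1 ≤ D)
    (hdouble : ∀ x ∈ X, ∀ r : ℝ, 0 < r →
      μ (closedBall x (2 * r)) ≤ ENNReal.ofReal D * μ (closedBall x r))
    (x : EuclideanSpace ℝ (Fin d)) (hx : x ∈ X) (N : ℕ) (ε : ℝ)
    (hsparse : (((Finset.Icc 1 N).filter (fun k : ℕ =>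
        (X ∩ (closedBall x ((2:ℝ)^(-(k:ℤ))) \ closedBall x ((2:ℝ)^(-(k:ℤ)-1)))).Nonempty)).card : ℝ)
        ≤ ε * N) :
    ENNReal.ofReal (D ^ (-(ε * N) - 1)) ≤ μ (closedBall x ((2:ℝ)^(-(N:ℤ)))) :=
  statement4_general d X hXb μ hprob hsupp D hD hdouble x hx N ε hsparse
end

section
/- Let $c_4,c_5$ be nonzero real numbers and $q$ a nonzero rational. Consider the plane curve $C(t)=(c_4\,3^t,\ c_5\,5^{qt})$ for $t$ in a compact interval $I$. Then $C$ has nowhere vanishing curvature: for all $t\in I$, the vectors $C'(t)$ and $C''(t)$ are linearly independent, i.e. $C_1'(t)C_2''(t)-C_2'(t)C_1''(t)\neq 0$. -/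
open Real

theorem Real.rat_mul_log_ne_log_of_prime {p r : ℕ} (hp : p.Prime) (hr : r.Prime) (hpr : p ≠ r)
    (q : ℚ) : (q : ℝ) * log r ≠ log p := by
  intro h
  have hlog_pos : ∀ {n : ℕ}, n.Prime → 0 < log n := fun hn => log_pos (by exact_mod_cast hn.one_lt)
  have hq : 0 < q := by
    have : (0 : ℝ) < q * log r := h ▸ hlog_pos hp
    exact_mod_cast pos_of_mul_pos_left this (hlog_pos hr).le
  obtain ⟨n, hn⟩ := Int.eq_ofNat_of_zero_le (Rat.num_pos.mpr hq).le
  have hden : (q : ℝ) * q.den = n := by exact_mod_cast hn ▸ Rat.mul_den_eq_num q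
  -- clearing the denominator of `q` turns `r ^ q = p` into `r ^ num q = p ^ den q`
  have hpow : r ^ n = p ^ q.den := by
    have : ((r : ℝ) ^ n) = (p : ℝ) ^ q.den := by
      refine log_injOn_pos (Set.mem_Ioi.mpr (pow_pos (Nat.cast_pos.mpr hr.pos) _))
        (Set.mem_Ioi.mpr (pow_pos (Nat.cast_pos.mpr hp.pos) _)) ?_
      rw [log_pow, log_pow, ← hden, ← h]
      ring
    exact_mod_cast this
  have hn0 : n ≠ 0 := by
    rintro rfl
    exact hq.ne' (Rat.num_eq_zero.mp (by simpa using hn))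
  have : r ∣ p := hr.dvd_of_dvd_pow (hpow ▸ dvd_pow_self r hn0)
  exact hpr ((Nat.prime_dvd_prime_iff_eq hr hp).mp this).symm

theorem deriv_const_mul_exp_mul (c k : ℝ) :
    deriv (fun t => c * exp (k * t)) = fun t => c * k * exp (k * t) := by
  ext t
  have : HasDerivAt (fun t => k * t) k t := by simpa using (hasDerivAt_id t).const_mul k
  exact (((hasDerivAt_exp _).comp t this).const_mul c).deriv.trans (by ring)

theorem wronskian_const_mul_exp_mul (c₁ c₂ a b t : ℝ) :
    let f := fun t => c₁ * exp (a * t)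
    let g := fun t => c₂ * exp (b * t)
    deriv f t * deriv (deriv g) t - deriv g t * deriv (deriv f) t
      = c₁ * c₂ * a * b * (b - a) * exp ((a + b) * t) := by
  simp only [deriv_const_mul_exp_mul, add_mul, exp_add]
  ring

/-- the plane curve `t ↦ (c₄ 3^t, c₅ 5^{qt})`, with `c₄, c₅ ≠ 0` and
`q` a nonzero rational, has nowhere vanishing curvature: the Wronskian
`C₁' C₂'' - C₂' C₁''` never vanishes. -/
theorem statement11 (c₄ c₅ : ℝ) (hc₄ : c₄ ≠ 0) (hc₅ : c₅ ≠ 0) (q : ℚ) (hq : q ≠ 0)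
    (A B : ℝ) (C₁ C₂ : ℝ → ℝ)
    (hC₁ : C₁ = fun t => c₄ * (3 : ℝ) ^ t)
    (hC₂ : C₂ = fun t => c₅ * (5 : ℝ) ^ ((q : ℝ) * t)) :
    ∀ t ∈ Set.Icc A B,
      deriv C₁ t * deriv (deriv C₂) t - deriv C₂ t * deriv (deriv C₁) t ≠ 0 := by
  intro t _
  have e₁ : C₁ = fun t => c₄ * exp (log 3 * t) := by
    simp only [hC₁, rpow_def_of_pos (by norm_num : (0 : ℝ) < 3)]
  have e₂ : C₂ = fun t => c₅ * exp (q * log 5 * t) := by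
    ext t
    simp only [hC₂, rpow_def_of_pos (by norm_num : (0 : ℝ) < 5)]
    ring_nf
  have hlog₃ : log 3 ≠ 0 := (log_pos (by norm_num)).ne'
  have hlog₅ : (q : ℝ) * log 5 ≠ 0 := mul_ne_zero (by exact_mod_cast hq) (log_pos (by norm_num)).ne'
  have hindep : (q : ℝ) * log 5 - log 3 ≠ 0 :=
    sub_ne_zero.mpr <| by
      exact_mod_cast rat_mul_log_ne_log_of_prime Nat.prime_three Nat.prime_five (by norm_num) q
  rw [e₁, e₂, wronskian_const_mul_exp_mul]
  exact mul_ne_zero (by simp [*]) (exp_ne_zero _)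
end
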